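/- arXiv:2303.01666 — 8 statements merged into one kernel-verified Lean document; each statement's English description precedes it below -/
import Mathlib

section
/- Let A be an m×n real matrix, b ∈ ℝᵐ, and let z, ż, z̈, Δx ∈ ℝⁿ satisfy A ż = A z − b, A z̈ = 0, and A Δx = 0. For α ∈ ℝ, define x⁺ = z − ż sin(α) + z̈ (1 − cos(α)) + Δx. Then A x⁺ − b = (1 − sin(α)) (A z − b). -/
open Matrix

/-- The primal residual contracts exactly by the factor `1 - sin α` in one
arc-search iteration: if `A ż = A z - b`, `A z̈ = 0`, `A Δx = 0`, and
`x⁺ = z - ż sin α + z̈ (1 - cos α) + Δx`, then `A x⁺ - b = (1 - sin α)(A z - b)`. -/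
theorem primal_residual_contraction {m n : ℕ}
    (A : Matrix (Fin m) (Fin n) ℝ) (b : Fin m → ℝ)
    (z zdot zddot Δx : Fin n → ℝ)
    (h1 : A *ᵥ zdot = A *ᵥ z - b)
    (h2 : A *ᵥ zddot = 0)
    (h3 : A *ᵥ Δx = 0)
    (α : ℝ) (xplus : Fin n → ℝ)
    (hx : xplus = z - Real.sin α • zdot + (1 - Real.cos α) • zddot + Δx) :
    A *ᵥ xplus - b = (1 - Real.sin α) • (A *ᵥ z - b) := by
  subst hx
  simp only [mulVec_add, mulVec_sub, mulVec_smul, h1, h2, h3]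
  ext i
  simp [Pi.sub_apply, Pi.add_apply, Pi.smul_apply, smul_eq_mul]
  ring
end

section
/- Let A be an m×n real matrix, c ∈ ℝⁿ, and let λ, λ̇, λ̈, Δλ ∈ ℝᵐ and s, ṡ, s̈, Δs ∈ ℝⁿ satisfy Aᵀλ̇ + ṡ = Aᵀλ + s − c, Aᵀλ̈ + s̈ = 0, and AᵀΔλ + Δs = 0. For α ∈ ℝ, define λ⁺ = λ − λ̇ sin(α) + λ̈ (1 − cos(α)) + Δλ and s⁺ = s − ṡ sin(α) + s̈ (1 − cos(α)) + Δs. Then Aᵀλ⁺ + s⁺ − c = (1 − sin(α)) (Aᵀλ + s − c). -/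
open Matrix

/-- The dual residual contracts exactly by the factor `1 - sin α` in one
arc-search iteration: if `Aᵀ λ̇ + ṡ = Aᵀ λ + s - c`, `Aᵀ λ̈ + s̈ = 0`,
`Aᵀ Δλ + Δs = 0`, and `λ⁺ = λ - λ̇ sin α + λ̈ (1 - cos α) + Δλ`,
`s⁺ = s - ṡ sin α + s̈ (1 - cos α) + Δs`, then
`Aᵀ λ⁺ + s⁺ - c = (1 - sin α)(Aᵀ λ + s - c)`. -/
theorem dual_residual_contraction {m n : ℕ}
    (A : Matrix (Fin m) (Fin n) ℝ) (c : Fin n → ℝ)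
    (lam lamdot lamddot Δlam : Fin m → ℝ)
    (s sdot sddot Δs : Fin n → ℝ)
    (h1 : Aᵀ *ᵥ lamdot + sdot = Aᵀ *ᵥ lam + s - c)
    (h2 : Aᵀ *ᵥ lamddot + sddot = 0)
    (h3 : Aᵀ *ᵥ Δlam + Δs = 0)
    (α : ℝ) (lamplus : Fin m → ℝ) (splus : Fin n → ℝ)
    (hlam : lamplus = lam - Real.sin α • lamdot + (1 - Real.cos α) • lamddot + Δlam)
    (hs : splus = s - Real.sin α • sdot + (1 - Real.cos α) • sddot + Δs) :
    Aᵀ *ᵥ lamplus + splus - c = (1 - Real.sin α) • (Aᵀ *ᵥ lam + s - c) := by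
  subst hlam hs
  simp only [mulVec_add, mulVec_sub, mulVec_smul]
  funext i
  have e1 := congrFun h1 i
  have e2 := congrFun h2 i
  have e3 := congrFun h3 i
  simp at e1 e2 e3 ⊢
  linear_combination (-Real.sin α) * e1 + (1 - Real.cos α) * e2 + e3
end

section
/- Let z, s, ż, ṡ, z̈, s̈ ∈ ℝⁿ satisfy s ∘ ż + z ∘ ṡ = z ∘ s and s ∘ z̈ + z ∘ s̈ = −2 (ż ∘ ṡ). For α ∈ ℝ, define x(α) = z − ż sin(α) + z̈ (1 − cos(α)) and s(α) = s − ṡ sin(α) + s̈ (1 − cos(α)). Then x(α) ∘ s(α) = (1 − sin(α)) (z ∘ s) + (z̈ ∘ s̈ − ż ∘ ṡ)(1 − cos(α))² − (z̈ ∘ ṡ + ż ∘ s̈) sin(α)(1 − cos(α)). -/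
/-- Hadamard-product identity along the ellipsoidal arc: if
`s ∘ ż + z ∘ ṡ = z ∘ s` and `s ∘ z̈ + z ∘ s̈ = -2 (ż ∘ ṡ)`, then for
`x(α) = z - ż sin α + z̈ (1 - cos α)` and `s(α) = s - ṡ sin α + s̈ (1 - cos α)`,
`x(α) ∘ s(α) = (1 - sin α)(z ∘ s) + (z̈ ∘ s̈ - ż ∘ ṡ)(1 - cos α)²
  - (z̈ ∘ ṡ + ż ∘ s̈) sin α (1 - cos α)`. -/
theorem arc_hadamard_identity {n : ℕ}
    (z s zdot sdot zddot sddot : Fin n → ℝ)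
    (h1 : s * zdot + z * sdot = z * s)
    (h2 : s * zddot + z * sddot = -(2 : ℝ) • (zdot * sdot))
    (α : ℝ) (xα sα : Fin n → ℝ)
    (hxα : xα = z - Real.sin α • zdot + (1 - Real.cos α) • zddot)
    (hsα : sα = s - Real.sin α • sdot + (1 - Real.cos α) • sddot) :
    xα * sα
      = (1 - Real.sin α) • (z * s)
        + (1 - Real.cos α) ^ 2 • (zddot * sddot - zdot * sdot)
        - (Real.sin α * (1 - Real.cos α)) • (zddot * sdot + zdot * sddot) := by
  subst hxα hsα
  funext i
  have e1 := congrFun h1 i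
  have e2 := congrFun h2 i
  simp only [Pi.add_apply, Pi.mul_apply, Pi.sub_apply, Pi.smul_apply, Pi.neg_apply,
    smul_eq_mul] at e1 e2 ⊢
  have hsc : Real.sin α ^ 2 + Real.cos α ^ 2 = 1 := Real.sin_sq_add_cos_sq α
  linear_combination (-Real.sin α) * e1 + (1 - Real.cos α) * e2 + (zdot i * sdot i) * hsc
end

section
/- Let z, s, ż, ṡ, z̈, s̈ ∈ ℝⁿ satisfy s ∘ ż + z ∘ ṡ = z ∘ s and s ∘ z̈ + z ∘ s̈ = −2 (ż ∘ ṡ). Let μ_z = zᵀs/n, let θ ≥ 0, and assume ‖z ∘ s − μ_z e‖ ≤ θ μ_z. For α ∈ [0, π/2], define x(α) = z − ż sin(α) + z̈ (1 − cos(α)) and s(α) = s − ṡ sin(α) + s̈ (1 − cos(α)). Then ‖x(α) ∘ s(α) − (1 − sin(α)) μ_z e‖ ≤ θ μ_z (1 − sin(α)) + (‖z̈ ∘ s̈‖ + ‖ż ∘ ṡ‖) sin⁴(α) + (‖z̈ ∘ ṡ‖ + ‖ż ∘ s̈‖) sin³(α). -/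
open Matrix

/-- The Euclidean norm on `Fin n → ℝ` (via the `ℓ²` structure). -/
noncomputable def euclNorm {n : ℕ} (v : Fin n → ℝ) : ℝ :=
  ‖(WithLp.equiv 2 (Fin n → ℝ)).symm v‖

lemma euclNorm_add_le {n : ℕ} (v w : Fin n → ℝ) :
    euclNorm (v + w) ≤ euclNorm v + euclNorm w := by
  simpa [euclNorm] using norm_add_le ((WithLp.equiv 2 (Fin n → ℝ)).symm v)
    ((WithLp.equiv 2 (Fin n → ℝ)).symm w)

lemma euclNorm_smul {n : ℕ} (a : ℝ) (v : Fin n → ℝ) :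
    euclNorm (a • v) = |a| * euclNorm v := by
  simpa [euclNorm] using norm_smul a ((WithLp.equiv 2 (Fin n → ℝ)).symm v)

lemma euclNorm_nonneg {n : ℕ} (v : Fin n → ℝ) : 0 ≤ euclNorm v :=
  norm_nonneg _

/-- Proximity bound along the ellipsoidal arc: if the arc derivative equations
`s ∘ ż + z ∘ ṡ = z ∘ s`, `s ∘ z̈ + z ∘ s̈ = -2 (ż ∘ ṡ)` hold,
`μ_z = zᵀ s / n`, `θ ≥ 0` and `‖z ∘ s - μ_z e‖ ≤ θ μ_z`, then for every
`α ∈ [0, π/2]` the arc point satisfies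
`‖x(α) ∘ s(α) - (1 - sin α) μ_z e‖
  ≤ θ μ_z (1 - sin α) + (‖z̈ ∘ s̈‖ + ‖ż ∘ ṡ‖) sin⁴ α + (‖z̈ ∘ ṡ‖ + ‖ż ∘ s̈‖) sin³ α`. -/
theorem arc_neighborhood_bound {n : ℕ}
    (z s zdot sdot zddot sddot : Fin n → ℝ)
    (h1 : s * zdot + z * sdot = z * s)
    (h2 : s * zddot + z * sddot = -(2 : ℝ) • (zdot * sdot))
    (μz : ℝ) (hμz : μz = (z ⬝ᵥ s) / n)
    (θ : ℝ) (hθ : 0 ≤ θ)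
    (hnbhd : euclNorm (z * s - μz • (fun _ => (1 : ℝ))) ≤ θ * μz) :
    ∀ α ∈ Set.Icc (0 : ℝ) (Real.pi / 2),
      euclNorm
          ((z - Real.sin α • zdot + (1 - Real.cos α) • zddot)
              * (s - Real.sin α • sdot + (1 - Real.cos α) • sddot)
            - ((1 - Real.sin α) * μz) • (fun _ => (1 : ℝ)))
        ≤ θ * μz * (1 - Real.sin α)
          + (euclNorm (zddot * sddot) + euclNorm (zdot * sdot)) * Real.sin α ^ 4
          + (euclNorm (zddot * sdot) + euclNorm (zdot * sddot)) * Real.sin α ^ 3 := by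
  intro α hα
  obtain ⟨hα0, hα1⟩ := hα
  set σ := Real.sin α with hσ
  set c := 1 - Real.cos α with hc
  have hsin0 : 0 ≤ σ := Real.sin_nonneg_of_nonneg_of_le_pi hα0
    (le_trans hα1 (by linarith [Real.pi_pos]))
  have hsin1 : σ ≤ 1 := Real.sin_le_one α
  have hcos0 : 0 ≤ Real.cos α := Real.cos_nonneg_of_mem_Icc ⟨by linarith [Real.pi_pos], hα1⟩
  have hcos1 : Real.cos α ≤ 1 := Real.cos_le_one α
  have hpyth : σ ^ 2 + Real.cos α ^ 2 = 1 := Real.sin_sq_add_cos_sq α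
  have hc0 : 0 ≤ c := by simp [hc]; linarith
  have hcle : c ≤ σ ^ 2 := by nlinarith
  -- key identity
  have hident :
      (z - σ • zdot + c • zddot) * (s - σ • sdot + c • sddot)
          - ((1 - σ) * μz) • (fun _ => (1 : ℝ))
        = (1 - σ) • (z * s - μz • (fun _ => (1 : ℝ)))
          + (σ ^ 2 - 2 * c) • (zdot * sdot)
          + (-(σ * c)) • (zdot * sddot + zddot * sdot)
          + (c ^ 2) • (zddot * sddot) := by
    funext i
    have e1 := congrFun h1 i
    have e2 := congrFun h2 i
    simp only [Pi.add_apply, Pi.mul_apply, Pi.sub_apply, Pi.smul_apply, Pi.neg_apply,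
      smul_eq_mul] at e1 e2 ⊢
    linear_combination (-σ) * e1 + c * e2
  rw [hident]
  have hμθ : 0 ≤ θ * μz := le_trans (euclNorm_nonneg _) hnbhd
  have t1 : euclNorm ((1 - σ) • (z * s - μz • (fun _ => (1 : ℝ))))
      ≤ θ * μz * (1 - σ) := by
    rw [euclNorm_smul, abs_of_nonneg (by linarith)]
    calc (1 - σ) * euclNorm (z * s - μz • (fun _ => (1 : ℝ)))
        ≤ (1 - σ) * (θ * μz) := by
          apply mul_le_mul_of_nonneg_left hnbhd (by linarith)
      _ = θ * μz * (1 - σ) := by ring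
  have t2 : euclNorm ((σ ^ 2 - 2 * c) • (zdot * sdot))
      ≤ euclNorm (zdot * sdot) * σ ^ 4 := by
    rw [euclNorm_smul]
    have habs : |σ ^ 2 - 2 * c| = c ^ 2 - (2 * c - σ ^ 2) + (2 * c - σ ^ 2) := by
      rw [abs_of_nonpos (by nlinarith)]
      nlinarith
    have habs2 : |σ ^ 2 - 2 * c| ≤ σ ^ 4 := by
      rw [abs_of_nonpos (by nlinarith)]
      nlinarith
    calc |σ ^ 2 - 2 * c| * euclNorm (zdot * sdot)
        ≤ σ ^ 4 * euclNorm (zdot * sdot) :=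
          mul_le_mul_of_nonneg_right habs2 (euclNorm_nonneg _)
      _ = euclNorm (zdot * sdot) * σ ^ 4 := by ring
  have t3 : euclNorm ((-(σ * c)) • (zdot * sddot + zddot * sdot))
      ≤ (euclNorm (zddot * sdot) + euclNorm (zdot * sddot)) * σ ^ 3 := by
    rw [euclNorm_smul, abs_neg, abs_of_nonneg (by positivity)]
    have h3 : σ * c ≤ σ ^ 3 := by nlinarith
    calc σ * c * euclNorm (zdot * sddot + zddot * sdot)
        ≤ σ ^ 3 * (euclNorm (zdot * sddot) + euclNorm (zddot * sdot)) := by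
          apply mul_le_mul h3 (euclNorm_add_le _ _) (euclNorm_nonneg _) (by positivity)
      _ = (euclNorm (zddot * sdot) + euclNorm (zdot * sddot)) * σ ^ 3 := by ring
  have t4 : euclNorm ((c ^ 2) • (zddot * sddot))
      ≤ euclNorm (zddot * sddot) * σ ^ 4 := by
    rw [euclNorm_smul, abs_of_nonneg (by positivity)]
    have h4 : c ^ 2 ≤ σ ^ 4 := by nlinarith
    calc c ^ 2 * euclNorm (zddot * sddot)
        ≤ σ ^ 4 * euclNorm (zddot * sddot) :=
          mul_le_mul_of_nonneg_right h4 (euclNorm_nonneg _)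
      _ = euclNorm (zddot * sddot) * σ ^ 4 := by ring
  calc euclNorm ((1 - σ) • (z * s - μz • (fun _ => (1 : ℝ)))
          + (σ ^ 2 - 2 * c) • (zdot * sdot)
          + (-(σ * c)) • (zdot * sddot + zddot * sdot)
          + (c ^ 2) • (zddot * sddot))
      ≤ euclNorm ((1 - σ) • (z * s - μz • (fun _ => (1 : ℝ)))
          + (σ ^ 2 - 2 * c) • (zdot * sdot)
          + (-(σ * c)) • (zdot * sddot + zddot * sdot))
        + euclNorm ((c ^ 2) • (zddot * sddot)) := euclNorm_add_le _ _
    _ ≤ euclNorm ((1 - σ) • (z * s - μz • (fun _ => (1 : ℝ)))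
          + (σ ^ 2 - 2 * c) • (zdot * sdot))
        + euclNorm ((-(σ * c)) • (zdot * sddot + zddot * sdot))
        + euclNorm ((c ^ 2) • (zddot * sddot)) := by
          gcongr; exact euclNorm_add_le _ _
    _ ≤ euclNorm ((1 - σ) • (z * s - μz • (fun _ => (1 : ℝ))))
        + euclNorm ((σ ^ 2 - 2 * c) • (zdot * sdot))
        + euclNorm ((-(σ * c)) • (zdot * sddot + zddot * sdot))
        + euclNorm ((c ^ 2) • (zddot * sddot)) := by
          gcongr; exact euclNorm_add_le _ _
    _ ≤ θ * μz * (1 - σ) + euclNorm (zdot * sdot) * σ ^ 4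
        + (euclNorm (zddot * sdot) + euclNorm (zdot * sddot)) * σ ^ 3
        + euclNorm (zddot * sddot) * σ ^ 4 :=
          add_le_add (add_le_add (add_le_add t1 t2) t3) t4
    _ = θ * μz * (1 - σ)
        + (euclNorm (zddot * sddot) + euclNorm (zdot * sdot)) * σ ^ 4
        + (euclNorm (zddot * sdot) + euclNorm (zdot * sddot)) * σ ^ 3 := by ring
end

section
/- Let n ≥ 1, let z, s ∈ ℝⁿ with z > 0 and s > 0 (componentwise), let θ ∈ (0, 1/2), μ_z = zᵀs/n, and assume ‖z ∘ s − μ_z e‖ ≤ θ μ_z. Let ż, ṡ, z̈, s̈ ∈ ℝⁿ satisfy s ∘ ż + z ∘ ṡ = z ∘ s and s ∘ z̈ + z ∘ s̈ = −2 (ż ∘ ṡ), and define x(α) = z − ż sin(α) + z̈ (1 − cos(α)) and s(α) = s − ṡ sin(α) + s̈ (1 − cos(α)). Then there exists ᾱ ∈ (0, π/2) such that for all α ∈ (0, ᾱ]: x(α) > 0, s(α) > 0, and ‖x(α) ∘ s(α) − (1 − sin(α)) μ_z e‖ ≤ 2θ (1 − sin(α)) μ_z; moreover x_i(α) s_i(α)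 ≥ (1 − 2θ)(1 − sin(α)) μ_z > 0 for every i. -/
open Matrix

lemma euclNorm_eq_sqrt {n : ℕ} (v : Fin n → ℝ) :
    euclNorm v = Real.sqrt (∑ i, v i ^ 2) := by
  simp [euclNorm, EuclideanSpace.norm_eq, Real.norm_eq_abs, sq_abs]

lemma abs_le_euclNorm {n : ℕ} (v : Fin n → ℝ) (i : Fin n) : |v i| ≤ euclNorm v := by
  rw [euclNorm_eq_sqrt, ← Real.sqrt_sq_eq_abs]
  exact Real.sqrt_le_sqrt
    (Finset.single_le_sum (fun j _ => sq_nonneg (v j)) (Finset.mem_univ i))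

lemma continuous_euclNorm_comp {n : ℕ} {f : ℝ → Fin n → ℝ}
    (hf : ∀ i, Continuous fun α => f α i) :
    Continuous fun α => euclNorm (f α) := by
  have h : (fun α => euclNorm (f α)) = fun α => Real.sqrt (∑ i, f α i ^ 2) := by
    funext α; rw [euclNorm_eq_sqrt]
  rw [h]
  exact Real.continuous_sqrt.comp (continuous_finset_sum _ fun i _ => (hf i).pow 2)

/-- Existence of a strictly positive arc step size: if `n ≥ 1`, `z, s > 0`,
`θ ∈ (0, 1/2)`, `μ_z = zᵀ s / n`, `(z, s)` lies in the `θ`-neighborhood of the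
central path, and the arc derivative equations hold, then there is an
`ᾱ ∈ (0, π/2)` such that for all `α ∈ (0, ᾱ]`, the arc point satisfies
`x(α) > 0`, `s(α) > 0`, the enlarged `2θ`-neighborhood condition, and
`xᵢ(α) sᵢ(α) ≥ (1 - 2θ)(1 - sin α) μ_z > 0` for every `i`. -/
theorem arc_positive_step_size_exists {n : ℕ} (hn : 1 ≤ n)
    (z s : Fin n → ℝ) (hz : ∀ i, 0 < z i) (hs : ∀ i, 0 < s i)
    (θ : ℝ) (hθ : θ ∈ Set.Ioo (0 : ℝ) (1 / 2))
    (μz : ℝ) (hμz : μz = (z ⬝ᵥ s) / n)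
    (hnbhd : euclNorm (z * s - μz • (fun _ => (1 : ℝ))) ≤ θ * μz)
    (zdot sdot zddot sddot : Fin n → ℝ)
    (h1 : s * zdot + z * sdot = z * s)
    (h2 : s * zddot + z * sddot = -(2 : ℝ) • (zdot * sdot))
    (xα sα : ℝ → Fin n → ℝ)
    (hxα : ∀ α, xα α = z - Real.sin α • zdot + (1 - Real.cos α) • zddot)
    (hsα : ∀ α, sα α = s - Real.sin α • sdot + (1 - Real.cos α) • sddot) :
    ∃ αbar ∈ Set.Ioo (0 : ℝ) (Real.pi / 2),
      ∀ α ∈ Set.Ioc (0 : ℝ) αbar,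
        (∀ i, 0 < xα α i) ∧ (∀ i, 0 < sα α i) ∧
        euclNorm (xα α * sα α - ((1 - Real.sin α) * μz) • (fun _ => (1 : ℝ)))
          ≤ 2 * θ * ((1 - Real.sin α) * μz) ∧
        (∀ i, (1 - 2 * θ) * ((1 - Real.sin α) * μz) ≤ xα α i * sα α i) ∧
        0 < (1 - 2 * θ) * ((1 - Real.sin α) * μz) := by
  obtain ⟨hθ0, hθ2⟩ := hθ
  haveI : Nonempty (Fin n) := Fin.pos_iff_nonempty.mp hn
  have hμ : 0 < μz := by
    rw [hμz, dotProduct]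
    apply div_pos
    · exact Finset.sum_pos (fun i _ => mul_pos (hz i) (hs i)) Finset.univ_nonempty
    · exact_mod_cast hn
  -- continuity of components
  have hcx : ∀ i, Continuous fun α => xα α i := by
    intro i
    simp only [hxα, Pi.add_apply, Pi.sub_apply, Pi.smul_apply, smul_eq_mul]
    fun_prop
  have hcs : ∀ i, Continuous fun α => sα α i := by
    intro i
    simp only [hsα, Pi.add_apply, Pi.sub_apply, Pi.smul_apply, smul_eq_mul]
    fun_prop
  -- values at 0
  have hx0 : ∀ i, xα 0 i = z i := by intro i; rw [hxα]; simp
  have hs0 : ∀ i, sα 0 i = s i := by intro i; rw [hsα]; simp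
  -- the norm function
  set G : ℝ → ℝ := fun α =>
    euclNorm (xα α * sα α - ((1 - Real.sin α) * μz) • (fun _ => (1 : ℝ)))
      - 2 * θ * ((1 - Real.sin α) * μz) with hGdef
  have hGcont : Continuous G := by
    apply Continuous.sub
    · apply continuous_euclNorm_comp
      intro i
      simp only [Pi.mul_apply, Pi.sub_apply, Pi.smul_apply, smul_eq_mul, mul_one]
      exact ((hcx i).mul (hcs i)).sub (by fun_prop)
    · fun_prop
  have hG0 : G 0 < 0 := by
    have hx0' : xα 0 = z := funext hx0
    have hs0' : sα 0 = s := funext hs0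
    have : G 0 = euclNorm (z * s - μz • (fun _ => (1 : ℝ))) - 2 * θ * μz := by
      simp [hGdef, hx0', hs0']
    rw [this]
    nlinarith
  -- eventually statements near 0
  have ev1 : ∀ᶠ α in nhds (0 : ℝ), ∀ i, 0 < xα α i := by
    rw [Filter.eventually_all]
    intro i
    have ht : Filter.Tendsto (fun α => xα α i) (nhds 0) (nhds (z i)) := by
      have := (hcx i).tendsto 0
      rwa [hx0 i] at this
    exact ht.eventually_const_lt (hz i)
  have ev2 : ∀ᶠ α in nhds (0 : ℝ), ∀ i, 0 < sα α i := by
    rw [Filter.eventually_all]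
    intro i
    have ht : Filter.Tendsto (fun α => sα α i) (nhds 0) (nhds (s i)) := by
      have := (hcs i).tendsto 0
      rwa [hs0 i] at this
    exact ht.eventually_const_lt (hs i)
  have ev3 : ∀ᶠ α in nhds (0 : ℝ), G α < 0 :=
    (hGcont.tendsto 0).eventually_lt_const hG0
  obtain ⟨ε, hε, hP⟩ := Metric.eventually_nhds_iff.mp ((ev1.and ev2).and ev3)
  refine ⟨min (ε / 2) (1 / 2), ⟨lt_min (by positivity) (by norm_num), ?_⟩, ?_⟩
  · have := Real.pi_gt_three
    calc min (ε / 2) (1 / 2) ≤ 1 / 2 := min_le_right _ _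
      _ < Real.pi / 2 := by linarith
  · intro α ⟨hα0, hαle⟩
    have hαε : dist α 0 < ε := by
      rw [Real.dist_eq, sub_zero, abs_of_pos hα0]
      have := le_trans hαle (min_le_left _ _)
      linarith
    obtain ⟨⟨hxpos, hspos⟩, hGα⟩ := hP hαε
    have hαhalf : α ≤ 1 / 2 := le_trans hαle (min_le_right _ _)
    have hsin1 : Real.sin α < 1 := by
      have := Real.sin_lt hα0
      linarith
    have hc : 0 < (1 - Real.sin α) * μz := mul_pos (by linarith) hμ
    have hnorm : euclNorm (xα α * sα α - ((1 - Real.sin α) * μz) • (fun _ => (1 : ℝ)))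
        ≤ 2 * θ * ((1 - Real.sin α) * μz) := by
      have : G α < 0 := hGα
      simp only [hGdef] at this
      linarith
    refine ⟨hxpos, hspos, hnorm, ?_, ?_⟩
    · intro i
      have habs := abs_le_euclNorm (xα α * sα α - ((1 - Real.sin α) * μz) • (fun _ => (1 : ℝ))) i
      simp only [Pi.mul_apply, Pi.sub_apply, Pi.smul_apply, smul_eq_mul, mul_one] at habs
      have h2θ := le_trans habs hnorm
      have := (abs_le.mp h2θ).1
      nlinarith
    · exact mul_pos (by linarith) hc
end

section
/- Let A be an m×n real matrix, z, s ∈ ℝⁿ with z > 0 and s > 0, Z = diag(z), S = diag(s), and D = Z^{1/2} S^{−1/2}. Let δz, δs ∈ ℝⁿ, δλ ∈ ℝᵐ, and r ∈ ℝⁿ satisfy A δz = 0, Aᵀδλ + δs = 0, and S δz + Z δs = r. Then ‖D⁻¹ δz‖ ≤ ‖D⁻¹ δz + D δs‖, ‖D δs‖ ≤ ‖D⁻¹ δz + D δs‖, and ‖D⁻¹ δz + D δs‖ = ‖(Z S)^{−1/2} r‖. In particular, if r = z ∘ s, then ‖D⁻¹ δz‖ ≤ √(zᵀs) and ‖D δs‖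 ≤ √(zᵀs). -/
/-!
The first two equations make `δz` and `δs` orthogonal, and this survives the scaling:
`(D⁻¹ δz) ⬝ (D δs) = δz ⬝ δs = 0` because `D` is diagonal. Pythagoras then bounds both scaled
components by their sum, and the third equation identifies that sum entrywise as
`(s_i δz_i + z_i δs_i) / √(z_i s_i)`. For `r = z ∘ s` the entries are `√(z_i s_i)`, whose
squares sum to `zᵀs`.
-/

open Matrix

theorem euclNorm_add_sq_of_dotProduct_eq_zero {n : ℕ} {u v : Fin n → ℝ} (h : u ⬝ᵥ v = 0) :
    euclNorm (u + v) ^ 2 = euclNorm u ^ 2 + euclNorm v ^ 2 := by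
  have := norm_add_sq_real (WithLp.toLp 2 u) (WithLp.toLp 2 v)
  rw [EuclideanSpace.inner_toLp_toLp, star_trivial, dotProduct_comm, h, mul_zero, add_zero,
    ← WithLp.toLp_add] at this
  exact this

theorem euclNorm_le_euclNorm_add_of_dotProduct_eq_zero {n : ℕ} {u v : Fin n → ℝ}
    (h : u ⬝ᵥ v = 0) : euclNorm u ≤ euclNorm (u + v) := by
  refine (sq_le_sq₀ (a := euclNorm u) (b := euclNorm (u + v)) (norm_nonneg _)
    (norm_nonneg _)).1 ?_
  rw [euclNorm_add_sq_of_dotProduct_eq_zero h]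
  exact le_add_of_nonneg_right (sq_nonneg _)

theorem euclNorm_sqrt {n : ℕ} {p : Fin n → ℝ} (hp : ∀ i, 0 ≤ p i) :
    euclNorm (fun i => √(p i)) = √(∑ i, p i) := by
  simp [euclNorm, EuclideanSpace.norm_eq, Real.sq_sqrt (hp _)]

theorem dotProduct_eq_zero_of_mulVec_eq_zero {R m n : Type*} [CommRing R] [Fintype m]
    [Fintype n] {A : Matrix m n R} {x w : n → R} {y : m → R} (hx : A *ᵥ x = 0)
    (hw : Aᵀ *ᵥ y + w = 0) : x ⬝ᵥ w = 0 := by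
  rw [eq_neg_of_add_eq_zero_right hw, dotProduct_neg, dotProduct_comm, mulVec_transpose,
    ← dotProduct_mulVec, hx, dotProduct_zero, neg_zero]

section Diagonal

variable {n : Type*} [Fintype n] [DecidableEq n]

theorem inv_diagonal_of_ne_zero {K : Type*} [Field K] {d : n → K} (hd : ∀ i, d i ≠ 0) :
    (diagonal d)⁻¹ = diagonal d⁻¹ :=
  inv_eq_left_inv <| by
    rw [diagonal_mul_diagonal, ← diagonal_one]
    exact congrArg diagonal (funext fun i => inv_mul_cancel₀ (hd i))

theorem inv_diagonal_mulVec_dotProduct_diagonal_mulVec {K : Type*} [Field K] {d : n → K}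
    (hd : ∀ i, d i ≠ 0) (x y : n → K) :
    (diagonal d)⁻¹ *ᵥ x ⬝ᵥ diagonal d *ᵥ y = x ⬝ᵥ y := by
  simp only [inv_diagonal_of_ne_zero hd, mulVec_diagonal, dotProduct, Pi.inv_apply]
  refine Finset.sum_congr rfl fun i _ => ?_
  field_simp [hd i]

theorem inv_diagonal_sqrt_div_mulVec_add {z s : n → ℝ} (hz : ∀ i, 0 < z i)
    (hs : ∀ i, 0 < s i) (x y : n → ℝ) :
    (diagonal fun i => √(z i) / √(s i))⁻¹ *ᵥ x + (diagonal fun i => √(z i) / √(s i)) *ᵥ y =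
      (diagonal fun i => (√(z i * s i))⁻¹) *ᵥ (diagonal s *ᵥ x + diagonal z *ᵥ y) := by
  have hd i : √(z i) / √(s i) ≠ 0 := by have := hz i; have := hs i; positivity
  ext i
  simp only [inv_diagonal_of_ne_zero hd, mulVec_diagonal, Pi.add_apply, Pi.inv_apply]
  have := Real.sqrt_pos.2 (hz i)
  have := Real.sqrt_pos.2 (hs i)
  rw [Real.sqrt_mul (hz i).le]
  field_simp
  rw [Real.sq_sqrt (hz i).le, Real.sq_sqrt (hs i).le]
  ring

theorem diagonal_inv_sqrt_mulVec_mul (z s : n → ℝ) :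
    (diagonal fun i => (√(z i * s i))⁻¹) *ᵥ (z * s) = fun i => √(z i * s i) := by
  ext i
  rw [mulVec_diagonal, Pi.mul_apply, mul_comm, ← div_eq_mul_inv, Real.div_sqrt]

end Diagonal

/-- Scaled-direction bounds: with `z, s > 0`, `D = Z^{1/2} S^{-1/2}`, and
`(δz, δlam, δs)` solving `A δz = 0`, `Aᵀ δlam + δs = 0`, `S δz + Z δs = r`,
one has `‖D⁻¹ δz‖ ≤ ‖D⁻¹ δz + D δs‖`, `‖D δs‖ ≤ ‖D⁻¹ δz + D δs‖`, and
`‖D⁻¹ δz + D δs‖ = ‖(Z S)^{-1/2} r‖`; in particular, if `r = z ∘ s`, then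
`‖D⁻¹ δz‖ ≤ √(zᵀ s)` and `‖D δs‖ ≤ √(zᵀ s)`. -/
theorem scaled_direction_bounds {m n : ℕ}
    (A : Matrix (Fin m) (Fin n) ℝ)
    (z s : Fin n → ℝ) (hz : ∀ i, 0 < z i) (hs : ∀ i, 0 < s i)
    (D : Matrix (Fin n) (Fin n) ℝ)
    (hD : D = Matrix.diagonal (fun i => Real.sqrt (z i) / Real.sqrt (s i)))
    (δz δs : Fin n → ℝ) (δlam : Fin m → ℝ) (r : Fin n → ℝ)
    (h1 : A *ᵥ δz = 0)
    (h2 : Aᵀ *ᵥ δlam + δs = 0)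
    (h3 : Matrix.diagonal s *ᵥ δz + Matrix.diagonal z *ᵥ δs = r) :
    euclNorm (D⁻¹ *ᵥ δz) ≤ euclNorm (D⁻¹ *ᵥ δz + D *ᵥ δs) ∧
    euclNorm (D *ᵥ δs) ≤ euclNorm (D⁻¹ *ᵥ δz + D *ᵥ δs) ∧
    euclNorm (D⁻¹ *ᵥ δz + D *ᵥ δs)
      = euclNorm ((Matrix.diagonal fun i => (Real.sqrt (z i * s i))⁻¹) *ᵥ r) ∧
    (r = z * s →
      euclNorm (D⁻¹ *ᵥ δz) ≤ Real.sqrt (z ⬝ᵥ s) ∧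
      euclNorm (D *ᵥ δs) ≤ Real.sqrt (z ⬝ᵥ s)) := by
  have hd i : √(z i) / √(s i) ≠ 0 := by have := hz i; have := hs i; positivity
  have horth : D⁻¹ *ᵥ δz ⬝ᵥ D *ᵥ δs = 0 := by
    rw [hD, inv_diagonal_mulVec_dotProduct_diagonal_mulVec hd]
    exact dotProduct_eq_zero_of_mulVec_eq_zero h1 h2
  have hsum : D⁻¹ *ᵥ δz + D *ᵥ δs = (diagonal fun i => (√(z i * s i))⁻¹) *ᵥ r := by
    rw [hD, inv_diagonal_sqrt_div_mulVec_add hz hs, h3]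
  have hle_z := euclNorm_le_euclNorm_add_of_dotProduct_eq_zero horth
  have hle_s := euclNorm_le_euclNorm_add_of_dotProduct_eq_zero (u := D *ᵥ δs) (v := D⁻¹ *ᵥ δz)
    (by rwa [dotProduct_comm])
  rw [add_comm] at hle_s
  refine ⟨hle_z, hle_s, congrArg euclNorm hsum, fun hr => ?_⟩
  rw [hsum, hr, diagonal_inv_sqrt_mulVec_mul,
    euclNorm_sqrt fun i => (mul_pos (hz i) (hs i)).le] at hle_z hle_s
  exact ⟨hle_z, hle_s⟩
end

section
/- Let n ≥ 1 be an integer, θ ∈ (0, 1/(2 + √2)], μ > 0, and let C₁, C₂, C₄ > 0. Let ż, ṡ, z̈, s̈ ∈ ℝⁿ satisfy ‖ż ∘ ṡ‖ ≤ C₁ n² μ, ‖z̈ ∘ s̈‖ ≤ C₂ n⁴ μ, ‖z̈ ∘ ṡ‖ ≤ C₄ n³ μ, and ‖ż ∘ s̈‖ ≤ C₄ n³ μ. Set C = max{1, C₄^{1/3}, (C₁ + C₂)^{1/4}}. Then for every α ∈ [0, π/2] with sin(α) ≤ θ/(2 C n), it holds that (‖z̈ ∘ s̈‖ + ‖ż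 ∘ ṡ‖) sin⁴(α) + (‖z̈ ∘ ṡ‖ + ‖ż ∘ s̈‖) sin³(α) ≤ θ μ (1 − sin(α)). -/
/-- Step-size lower bound condition: under the polynomial bounds
`‖ż ∘ ṡ‖ ≤ C₁ n² μ`, `‖z̈ ∘ s̈‖ ≤ C₂ n⁴ μ`, `‖z̈ ∘ ṡ‖, ‖ż ∘ s̈‖ ≤ C₄ n³ μ`,
with `C = max {1, C₄^{1/3}, (C₁ + C₂)^{1/4}}`, every `α ∈ [0, π/2]` with
`sin α ≤ θ / (2 C n)` satisfies
`(‖z̈ ∘ s̈‖ + ‖ż ∘ ṡ‖) sin⁴ α + (‖z̈ ∘ ṡ‖ + ‖ż ∘ s̈‖) sin³ α ≤ θ μ (1 - sin α)`. -/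
theorem step_size_lower_bound_condition {n : ℕ} (hn : 1 ≤ n)
    (θ : ℝ) (hθ : θ ∈ Set.Ioc (0 : ℝ) (1 / (2 + Real.sqrt 2)))
    (μ : ℝ) (hμ : 0 < μ)
    (C1 C2 C4 : ℝ) (hC1 : 0 < C1) (hC2 : 0 < C2) (hC4 : 0 < C4)
    (zdot sdot zddot sddot : Fin n → ℝ)
    (h1 : euclNorm (zdot * sdot) ≤ C1 * n ^ 2 * μ)
    (h2 : euclNorm (zddot * sddot) ≤ C2 * n ^ 4 * μ)
    (h3 : euclNorm (zddot * sdot) ≤ C4 * n ^ 3 * μ)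
    (h4 : euclNorm (zdot * sddot) ≤ C4 * n ^ 3 * μ)
    (C : ℝ) (hC : C = max 1 (max (C4 ^ ((1 : ℝ) / 3)) ((C1 + C2) ^ ((1 : ℝ) / 4)))) :
    ∀ α ∈ Set.Icc (0 : ℝ) (Real.pi / 2), Real.sin α ≤ θ / (2 * C * n) →
      (euclNorm (zddot * sddot) + euclNorm (zdot * sdot)) * Real.sin α ^ 4
        + (euclNorm (zddot * sdot) + euclNorm (zdot * sddot)) * Real.sin α ^ 3
      ≤ θ * μ * (1 - Real.sin α) := by
  intro α hα hsle
  have hN1 : 0 ≤ euclNorm (zdot * sdot) := norm_nonneg _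
  have hN2 : 0 ≤ euclNorm (zddot * sddot) := norm_nonneg _
  have hN3 : 0 ≤ euclNorm (zddot * sdot) := norm_nonneg _
  have hN4 : 0 ≤ euclNorm (zdot * sddot) := norm_nonneg _
  set N1 := euclNorm (zdot * sdot) with hN1def
  set N2 := euclNorm (zddot * sddot) with hN2def
  set N3 := euclNorm (zddot * sdot) with hN3def
  set N4 := euclNorm (zdot * sddot) with hN4def
  clear_value N1 N2 N3 N4
  obtain ⟨hθ0, hθub⟩ := hθ
  have hsqrt : (1 : ℝ) ≤ Real.sqrt 2 := by
    nlinarith [Real.sq_sqrt (by norm_num : (0:ℝ) ≤ 2), Real.sqrt_nonneg 2]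
  have hθ3 : θ ≤ 1 / 3 := by
    refine hθub.trans ?_
    rw [div_le_div_iff₀ (by linarith) (by norm_num)]
    linarith
  have hn1 : (1 : ℝ) ≤ (n : ℝ) := by exact_mod_cast hn
  have hC1' : (1 : ℝ) ≤ C := hC ▸ le_max_left _ _
  have hC0 : 0 < C := lt_of_lt_of_le one_pos hC1'
  -- C4 ≤ C ^ 3
  have hCc : C4 ^ ((1 : ℝ) / 3) ≤ C := hC ▸ le_trans (le_max_left _ _) (le_max_right _ _)
  have hCq : (C1 + C2) ^ ((1 : ℝ) / 4) ≤ C :=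
    hC ▸ le_trans (le_max_right _ _) (le_max_right _ _)
  have hC3 : C4 ≤ C ^ 3 := by
    have h := pow_le_pow_left₀ (Real.rpow_nonneg hC4.le _) hCc 3
    rwa [← Real.rpow_natCast (C4 ^ ((1:ℝ)/3)) 3, ← Real.rpow_mul hC4.le, show
      (1:ℝ)/3 * (3:ℕ) = 1 by norm_num, Real.rpow_one] at h
  have hC4' : C1 + C2 ≤ C ^ 4 := by
    have h := pow_le_pow_left₀ (Real.rpow_nonneg (by linarith : (0:ℝ) ≤ C1 + C2) _) hCq 4
    rwa [← Real.rpow_natCast ((C1 + C2) ^ ((1:ℝ)/4)) 4,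
      ← Real.rpow_mul (by linarith : (0:ℝ) ≤ C1 + C2), show
      (1:ℝ)/4 * (4:ℕ) = 1 by norm_num, Real.rpow_one] at h
  set s := Real.sin α with hsdef
  clear_value s
  have hs0 : 0 ≤ s := by
    rw [hsdef]
    exact Real.sin_nonneg_of_nonneg_of_le_pi hα.1 (hα.2.trans (by linarith [Real.pi_pos]))
  have hCn : (1 : ℝ) ≤ C * n := by nlinarith
  have ht : 2 * (C * n * s) ≤ θ := by
    rw [le_div_iff₀ (by positivity)] at hsle
    rw [show 2 * (C * (n:ℝ) * s) = s * (2 * C * (n:ℝ)) by ring]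
    exact hsle
  set t := C * (n : ℝ) * s with htdef
  clear_value t
  have ht0 : 0 ≤ t := by rw [htdef]; positivity
  have hst : s ≤ t := htdef ▸ le_mul_of_one_le_left hs0 hCn
  -- norm bounds
  have hn24 : (n : ℝ) ^ 2 ≤ (n : ℝ) ^ 4 := pow_le_pow_right₀ hn1 (by norm_num)
  have key1 : N2 + N1 ≤ C ^ 4 * n ^ 4 * μ := by
    have hb : (C1 + C2) * (n:ℝ) ^ 4 * μ ≤ C ^ 4 * (n:ℝ) ^ 4 * μ := by
      rw [mul_assoc, mul_assoc]
      exact mul_le_mul_of_nonneg_right hC4' (by positivity)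
    have hc : C1 * (n:ℝ) ^ 2 * μ ≤ C1 * (n:ℝ) ^ 4 * μ :=
      mul_le_mul_of_nonneg_right (mul_le_mul_of_nonneg_left hn24 hC1.le) hμ.le
    have hsum : C1 * (n:ℝ) ^ 4 * μ + C2 * (n:ℝ) ^ 4 * μ = (C1 + C2) * (n:ℝ) ^ 4 * μ := by
      ring
    linarith
  have key2 : N3 + N4 ≤ 2 * (C ^ 3 * n ^ 3 * μ) := by
    have hb : C4 * (n:ℝ) ^ 3 * μ ≤ C ^ 3 * (n:ℝ) ^ 3 * μ := by
      rw [mul_assoc, mul_assoc]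
      exact mul_le_mul_of_nonneg_right hC3 (by positivity)
    have : 2 * (C ^ 3 * (n:ℝ) ^ 3 * μ) = C ^ 3 * (n:ℝ) ^ 3 * μ + C ^ 3 * (n:ℝ) ^ 3 * μ := by
      ring
    linarith
  have step1 : (N2 + N1) * s ^ 4 + (N3 + N4) * s ^ 3
      ≤ μ * t ^ 4 + 2 * μ * t ^ 3 := by
    have e1 : C ^ 4 * (n:ℝ) ^ 4 * μ * s ^ 4 = μ * t ^ 4 := by rw [htdef]; ring
    have e2 : 2 * (C ^ 3 * (n:ℝ) ^ 3 * μ) * s ^ 3 = 2 * μ * t ^ 3 := by rw [htdef]; ring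
    have b1 := mul_le_mul_of_nonneg_right key1 (pow_nonneg hs0 4)
    have b2 := mul_le_mul_of_nonneg_right key2 (pow_nonneg hs0 3)
    rw [e1] at b1; rw [e2] at b2; linarith
  refine step1.trans ?_
  have ht2 : 2 * t ≤ θ := by linarith [ht]
  clear step1 key1 key2 h1 h2 h3 h4 hC hCc hCq hα hsdef htdef hsle ht hC3 hC4' hθub hsqrt
    hn24 hCn hN1 hN2 hN3 hN4
  clear hN1def hN2def hN3def hN4def zdot sdot zddot sddot N1 N2 N3 N4 C1 C2 C4 α hC1 hC2 hC4 hn hn1 hC1' hC0 C n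
  -- now μ t⁴ + 2 μ t³ ≤ θ μ (1 - s)
  have ht6 : t ≤ 1 / 6 := by linarith [ht2]
  have hA : μ * t ^ 4 + 2 * μ * t ^ 3 ≤ (13 / 6) * (μ * t ^ 3) := by
    nlinarith [mul_nonneg (mul_nonneg hμ.le (pow_nonneg ht0 3)) (sub_nonneg.2 ht6)]
  have ht36 : t ^ 2 ≤ 1 / 36 := by nlinarith
  have hB : μ * t ^ 3 ≤ (1 / 36) * (μ * t) := by
    nlinarith [mul_nonneg (mul_nonneg hμ.le ht0) (sub_nonneg.2 ht36)]
  have hC' : μ * t ≤ μ * (θ / 2) := mul_le_mul_of_nonneg_left (by linarith) hμ.le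
  have hs6 : (5 : ℝ) / 6 ≤ 1 - s := by linarith
  have hD : (5 / 6) * (θ * μ) ≤ θ * μ * (1 - s) := by
    nlinarith [mul_le_mul_of_nonneg_left hs6 (mul_nonneg hθ0.le hμ.le)]
  nlinarith [mul_pos hθ0 hμ]
end

section
/- Let n ≥ 1, θ ∈ (0, 1/(2 + √2)], and ν > 0 be real. Let u, v ∈ ℝⁿ with u > 0, v > 0, and ‖u ∘ v − ν e‖ ≤ 2θν. Let Δx, Δs ∈ ℝⁿ satisfy ΔxᵀΔs = 0 and v ∘ Δx + u ∘ Δs = ν e − u ∘ v. Define x⁺ = u + Δx, s⁺ = v + Δs, and μ⁺ = (x⁺)ᵀs⁺/n. Then x⁺ > 0, s⁺ > 0, μ⁺ = ν, and ‖x⁺ ∘ s⁺ − μ⁺ e‖ ≤ θ μ⁺. -/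
open Matrix

lemma euclNorm_eq {n : ℕ} (w : Fin n → ℝ) :
    euclNorm w = Real.sqrt (∑ i, w i ^ 2) := by
  simp [euclNorm, EuclideanSpace.norm_eq, sq_abs]

lemma abs_le_sqrt_sum {n : ℕ} (w : Fin n → ℝ) (i : Fin n) :
    |w i| ≤ Real.sqrt (∑ j, w j ^ 2) := by
  rw [← Real.sqrt_sq_eq_abs]
  exact Real.sqrt_le_sqrt (Finset.single_le_sum (fun j _ => sq_nonneg (w j)) (Finset.mem_univ i))


set_option maxHeartbeats 1000000 in
/-- The corrector step returns to the `θ`-neighborhood: if `n ≥ 1`,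
`θ ∈ (0, 1/(2 + √2)]`, `ν > 0`, `u, v > 0` with `‖u ∘ v - ν e‖ ≤ 2θν`,
and `(Δx, Δs)` satisfies `Δxᵀ Δs = 0` and `v ∘ Δx + u ∘ Δs = ν e - u ∘ v`,
then for `x⁺ = u + Δx`, `s⁺ = v + Δs`, `μ⁺ = (x⁺)ᵀ s⁺ / n`, we have
`x⁺ > 0`, `s⁺ > 0`, `μ⁺ = ν`, and `‖x⁺ ∘ s⁺ - μ⁺ e‖ ≤ θ μ⁺`. -/
theorem corrector_returns_to_neighborhood {n : ℕ} (hn : 1 ≤ n)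
    (θ : ℝ) (hθ : θ ∈ Set.Ioc (0 : ℝ) (1 / (2 + Real.sqrt 2)))
    (ν : ℝ) (hν : 0 < ν)
    (u v : Fin n → ℝ) (hu : ∀ i, 0 < u i) (hv : ∀ i, 0 < v i)
    (hnbhd : euclNorm (u * v - ν • (fun _ => (1 : ℝ))) ≤ 2 * θ * ν)
    (Δx Δs : Fin n → ℝ)
    (horth : Δx ⬝ᵥ Δs = 0)
    (hcorr : v * Δx + u * Δs = ν • (fun _ => (1 : ℝ)) - u * v)
    (xplus splus : Fin n → ℝ) (hxplus : xplus = u + Δx) (hsplus : splus = v + Δs)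
    (μplus : ℝ) (hμplus : μplus = (xplus ⬝ᵥ splus) / n) :
    (∀ i, 0 < xplus i) ∧ (∀ i, 0 < splus i) ∧ μplus = ν ∧
      euclNorm (xplus * splus - μplus • (fun _ => (1 : ℝ))) ≤ θ * μplus := by
  obtain ⟨hθ0, hθ1⟩ := hθ
  have hs2sq : Real.sqrt 2 ^ 2 = 2 := Real.sq_sqrt (by norm_num)
  have hs2pos : (0 : ℝ) < Real.sqrt 2 := Real.sqrt_pos.2 (by norm_num)
  have hd : (0 : ℝ) < 2 + Real.sqrt 2 := by positivity
  rw [le_div_iff₀ hd] at hθ1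
  have hθhalf : 2 * θ < 1 := by nlinarith [mul_pos hθ0 hs2pos]
  have hkey : Real.sqrt 2 * θ ≤ 1 - 2 * θ := by nlinarith [hθ1]
  have hθlt1 : θ < 1 := by linarith
  have h12 : (0 : ℝ) < 1 - 2 * θ := by linarith
  have hν' : ν ≠ 0 := hν.ne'
  have hcorr_i : ∀ i, v i * Δx i + u i * Δs i = ν - u i * v i := by
    intro i
    have := congrFun hcorr i
    simpa [Pi.mul_apply, Pi.add_apply, Pi.sub_apply] using this
  set a : Fin n → ℝ := fun i => Δx i * Δs i with ha_def
  have hsum_a : ∑ i, a i = 0 := by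
    simpa [dotProduct, ha_def] using horth
  have hprod : ∀ i, xplus i * splus i = ν + a i := by
    intro i
    have h := hcorr_i i
    simp only [hxplus, hsplus, Pi.add_apply, ha_def]
    nlinarith [h]
  have hdot : xplus ⬝ᵥ splus = n * ν := by
    simp only [dotProduct]
    calc ∑ i, xplus i * splus i = ∑ i, (ν + a i) :=
          Finset.sum_congr rfl fun i _ => hprod i
      _ = n * ν := by
          rw [Finset.sum_add_distrib, hsum_a]
          simp [mul_comm]
  have hnne : (n : ℝ) ≠ 0 := by positivity
  have hμν : μplus = ν := by
    rw [hμplus, hdot, mul_div_assoc]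
    field_simp
  have hnb_i : ∀ i, |u i * v i - ν| ≤ 2 * θ * ν := by
    intro i
    have h1 := abs_le_sqrt_sum (u * v - ν • (fun _ => (1 : ℝ))) i
    rw [← euclNorm_eq] at h1
    simpa [Pi.sub_apply, Pi.mul_apply] using h1.trans hnbhd
  have huv_pos : ∀ i, 0 < u i * v i := fun i => mul_pos (hu i) (hv i)
  have huv_lb : ∀ i, (1 - 2 * θ) * ν ≤ u i * v i := by
    intro i
    have := (abs_le.1 (hnb_i i)).1
    nlinarith
  set c : Fin n → ℝ := fun i => (ν - u i * v i) ^ 2 / (u i * v i) with hc_def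
  have hc_nonneg : ∀ i, 0 ≤ c i := fun i => div_nonneg (sq_nonneg _) (huv_pos i).le
  have ha_le : ∀ i, a i ≤ c i / 4 := by
    intro i
    have h4 : 4 * (u i * v i) * (Δx i * Δs i) ≤ (ν - u i * v i) ^ 2 := by
      have h := hcorr_i i
      have heq : (ν - u i * v i) ^ 2 = (v i * Δx i + u i * Δs i) ^ 2 := by rw [← h]
      rw [heq]
      nlinarith [sq_nonneg (v i * Δx i - u i * Δs i)]
    have h5 : Δx i * Δs i ≤ (ν - u i * v i) ^ 2 / (4 * (u i * v i)) := by
      rw [le_div_iff₀ (mul_pos (by norm_num) (huv_pos i))]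
      nlinarith [h4]
    calc a i = Δx i * Δs i := rfl
      _ ≤ (ν - u i * v i) ^ 2 / (4 * (u i * v i)) := h5
      _ = c i / 4 := by rw [hc_def]; ring
  -- sum of squared residuals bound
  have hsq_sum : ∑ i, (ν - u i * v i) ^ 2 ≤ (2 * θ * ν) ^ 2 := by
    set w : Fin n → ℝ := u * v - ν • (fun _ => (1 : ℝ)) with hw_def
    have h0 : (0:ℝ) ≤ ∑ i, w i ^ 2 :=
      Finset.sum_nonneg fun i _ => sq_nonneg _
    have h0' : 0 ≤ euclNorm w := by
      rw [euclNorm_eq]; exact Real.sqrt_nonneg _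
    have h1 : euclNorm w ^ 2 ≤ (2 * θ * ν) ^ 2 :=
      pow_le_pow_left₀ h0' hnbhd 2
    rw [euclNorm_eq, Real.sq_sqrt h0] at h1
    calc ∑ i, (ν - u i * v i) ^ 2
        = ∑ i, w i ^ 2 := by
          refine Finset.sum_congr rfl fun i _ => ?_
          simp only [hw_def, Pi.sub_apply, Pi.mul_apply, Pi.smul_apply, smul_eq_mul, mul_one]
          ring
      _ ≤ (2 * θ * ν) ^ 2 := h1
  have hc_sum : ∑ i, c i ≤ 4 * θ ^ 2 * ν / (1 - 2 * θ) := by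
    have hlb : 0 < (1 - 2 * θ) * ν := mul_pos h12 hν
    calc ∑ i, c i ≤ ∑ i, (ν - u i * v i) ^ 2 / ((1 - 2 * θ) * ν) :=
          Finset.sum_le_sum fun i _ =>
            div_le_div_of_nonneg_left (sq_nonneg _) hlb (huv_lb i)
      _ = (∑ i, (ν - u i * v i) ^ 2) / ((1 - 2 * θ) * ν) := by
          rw [Finset.sum_div]
      _ ≤ (2 * θ * ν) ^ 2 / ((1 - 2 * θ) * ν) := by gcongr
      _ = 4 * θ ^ 2 * ν / (1 - 2 * θ) := by
          field_simp
          ring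
  -- split sum of squares of a
  set S : Finset (Fin n) := Finset.univ.filter (fun i => 0 ≤ a i) with hS_def
  set T : ℝ := ∑ i ∈ S, a i with hT_def
  have hT_nonneg : 0 ≤ T :=
    Finset.sum_nonneg fun i hi => (Finset.mem_filter.1 hi).2
  have hsplit := Finset.sum_filter_add_sum_filter_not Finset.univ (fun i => 0 ≤ a i) a
  have hneg : ∑ i ∈ Finset.univ.filter (fun i => ¬ 0 ≤ a i), a i = -T := by
    rw [hT_def]; rw [hsum_a] at hsplit; linarith [hsplit]
  have hTc : ∑ i ∈ Finset.univ.filter (fun i => ¬ 0 ≤ a i), (-a i) = T := by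
    rw [Finset.sum_neg_distrib, hneg, neg_neg]
  have hT_le : T ≤ θ ^ 2 * ν / (1 - 2 * θ) := by
    have h1 : T ≤ (∑ i, c i) / 4 := by
      rw [hT_def]
      calc ∑ i ∈ S, a i ≤ ∑ i ∈ S, c i / 4 := Finset.sum_le_sum fun i _ => ha_le i
        _ ≤ ∑ i, c i / 4 := Finset.sum_le_sum_of_subset_of_nonneg (Finset.subset_univ S)
              (fun i _ _ => div_nonneg (hc_nonneg i) (by norm_num))
        _ = (∑ i, c i) / 4 := by rw [Finset.sum_div]
    calc T ≤ (∑ i, c i) / 4 := h1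
      _ ≤ (4 * θ ^ 2 * ν / (1 - 2 * θ)) / 4 := by linarith
      _ = θ ^ 2 * ν / (1 - 2 * θ) := by ring
  have hsumsq : ∑ i, (a i) ^ 2 ≤ 2 * T ^ 2 := by
    have hA : ∑ i ∈ S, (a i) ^ 2 ≤ T ^ 2 := by
      rw [hT_def]
      exact Finset.sum_sq_le_sq_sum_of_nonneg (fun i hi => (Finset.mem_filter.1 hi).2)
    have hB : ∑ i ∈ Finset.univ.filter (fun i => ¬ 0 ≤ a i), (a i) ^ 2 ≤ T ^ 2 := by
      have hnn : ∀ i ∈ Finset.univ.filter (fun i => ¬ 0 ≤ a i), 0 ≤ -a i := by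
        intro i hi
        have := (Finset.mem_filter.1 hi).2
        linarith [lt_of_not_ge this]
      have h := Finset.sum_sq_le_sq_sum_of_nonneg hnn
      rw [hTc] at h
      calc ∑ i ∈ Finset.univ.filter (fun i => ¬ 0 ≤ a i), (a i) ^ 2
          = ∑ i ∈ Finset.univ.filter (fun i => ¬ 0 ≤ a i), (-a i) ^ 2 := by
            exact Finset.sum_congr rfl fun i _ => (neg_sq (a i)).symm
        _ ≤ T ^ 2 := h
    have hsplit2 := Finset.sum_filter_add_sum_filter_not Finset.univ
      (fun i => 0 ≤ a i) (fun i => (a i) ^ 2)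
    rw [← hsplit2]
    have : (Finset.univ.filter (fun i => 0 ≤ a i)) = S := rfl
    rw [this]
    linarith
  have hnorm_a : Real.sqrt (∑ i, (a i) ^ 2) ≤ θ * ν := by
    have h2T : Real.sqrt (∑ i, (a i) ^ 2) ≤ Real.sqrt (2 * T ^ 2) :=
      Real.sqrt_le_sqrt hsumsq
    have heq : Real.sqrt (2 * T ^ 2) = Real.sqrt 2 * T := by
      rw [Real.sqrt_mul (by norm_num : (0:ℝ) ≤ 2), Real.sqrt_sq hT_nonneg]
    have hstep : Real.sqrt 2 * T ≤ Real.sqrt 2 * (θ ^ 2 * ν / (1 - 2 * θ)) :=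
      mul_le_mul_of_nonneg_left hT_le hs2pos.le
    have hlast : Real.sqrt 2 * (θ ^ 2 * ν / (1 - 2 * θ)) ≤ θ * ν := by
      rw [mul_div_assoc', div_le_iff₀ h12]
      calc Real.sqrt 2 * (θ ^ 2 * ν) = (Real.sqrt 2 * θ) * (θ * ν) := by ring
        _ ≤ (1 - 2 * θ) * (θ * ν) :=
            mul_le_mul_of_nonneg_right hkey (mul_pos hθ0 hν).le
        _ = θ * ν * (1 - 2 * θ) := by ring
    calc Real.sqrt (∑ i, (a i) ^ 2) ≤ Real.sqrt 2 * T := by rw [← heq]; exact h2T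
      _ ≤ Real.sqrt 2 * (θ ^ 2 * ν / (1 - 2 * θ)) := hstep
      _ ≤ θ * ν := hlast
  have habs : ∀ i, |a i| ≤ θ * ν := fun i => (abs_le_sqrt_sum a i).trans hnorm_a
  -- positivity
  have hposi : ∀ i, 0 < xplus i ∧ 0 < splus i := by
    intro i
    have ha_lb : -(θ * ν) ≤ a i := (abs_le.1 (habs i)).1
    have key : ∀ t : ℝ, 0 ≤ t → t ≤ 1 → 0 < (u i + t * Δx i) * (v i + t * Δs i) := by
      intro t ht0 ht1
      have h := hcorr_i i
      have hexp : (u i + t * Δx i) * (v i + t * Δs i)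
          = (1 - t) * (u i * v i) + t * ν + t ^ 2 * (Δx i * Δs i) := by
        linear_combination t * h
      rw [hexp]
      rcases eq_or_lt_of_le ht0 with h0 | h0
      · rw [← h0]; simpa using huv_pos i
      · have h1 : 0 ≤ (1 - t) * (u i * v i) := mul_nonneg (by linarith) (huv_pos i).le
        have h3 : t ^ 2 * (-(θ * ν)) ≤ t ^ 2 * (Δx i * Δs i) :=
          mul_le_mul_of_nonneg_left ha_lb (sq_nonneg t)
        have h4 : t ^ 2 * (θ * ν) ≤ t * (θ * ν) := by
          have : t ^ 2 ≤ t := by nlinarith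
          exact mul_le_mul_of_nonneg_right this (mul_pos hθ0 hν).le
        have h5 : 0 < t * ν * (1 - θ) := mul_pos (mul_pos h0 hν) (by linarith)
        nlinarith [h1, h3, h4, h5]
    constructor
    · by_contra hx
      push_neg at hx
      have hf : Continuous (fun t : ℝ => u i + t * Δx i) :=
        continuous_const.add (continuous_id.mul continuous_const)
      have hmem : (0:ℝ) ∈ Set.Icc (u i + 1 * Δx i) (u i + 0 * Δx i) := by
        constructor
        · have : xplus i = u i + Δx i := by rw [hxplus]; rfl
          simp only [one_mul]
          linarith [hx, this]
        · simp only [zero_mul, add_zero]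
          exact (hu i).le
      obtain ⟨t, ht, hft⟩ := intermediate_value_Icc' (by norm_num : (0:ℝ) ≤ 1)
        hf.continuousOn hmem
      have hk := key t ht.1 ht.2
      have hft' : u i + t * Δx i = 0 := hft
      rw [hft', zero_mul] at hk
      exact lt_irrefl 0 hk
    · by_contra hx
      push_neg at hx
      have hf : Continuous (fun t : ℝ => v i + t * Δs i) :=
        continuous_const.add (continuous_id.mul continuous_const)
      have hmem : (0:ℝ) ∈ Set.Icc (v i + 1 * Δs i) (v i + 0 * Δs i) := by
        constructor
        · have : splus i = v i + Δs i := by rw [hsplus]; rfl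
          simp only [one_mul]
          linarith [hx, this]
        · simp only [zero_mul, add_zero]
          exact (hv i).le
      obtain ⟨t, ht, hft⟩ := intermediate_value_Icc' (by norm_num : (0:ℝ) ≤ 1)
        hf.continuousOn hmem
      have hk := key t ht.1 ht.2
      have hft' : v i + t * Δs i = 0 := hft
      rw [hft', mul_zero] at hk
      exact lt_irrefl 0 hk
  refine ⟨fun i => (hposi i).1, fun i => (hposi i).2, hμν, ?_⟩
  rw [hμν]
  have hfin : euclNorm (xplus * splus - ν • (fun _ => (1 : ℝ)))
      = Real.sqrt (∑ i, (a i) ^ 2) := by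
    rw [euclNorm_eq]
    congr 1
    refine Finset.sum_congr rfl fun i _ => ?_
    simp only [Pi.sub_apply, Pi.mul_apply, Pi.smul_apply, smul_eq_mul, mul_one, hprod i]
    ring
  rw [hfin]
  exact hnorm_a
end
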